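/- Let Δ_{n,k} = {d ∈ ℕ : 0 ≤ d ≤ n+k, d ≡ n+k (mod 2), n+d ≥ k} and Δ_{n+k} = {d ∈ ℕ : 0 ≤ d ≤ n+k, d ≡ n+k (mod 2)}. Then d ∈ Δ_{n+k} belongs to Δ_{n,k} if and only if there exists a non-crossing perfect matching (monic (n+k,d)-diagram) with all d through-line endpoints and no link joining two of the bottom k left points. -/
import Mathlib


/-- A monic `(N,d)`-diagram: a non-crossing pairing (fixed-point-free involution with
no crossing links) of the `N` left points `0,…,N-1` and the `d` right points
`N,…,N+d-1`, in which all `d` right points are matched to left points. -/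
def IsMonicDiagram (N d : ℕ) (f : Fin (N + d) → Fin (N + d)) : Prop :=
  Function.Involutive f ∧ (∀ i, f i ≠ i) ∧
    (∀ i j : Fin (N + d), (i : ℕ) < (j : ℕ) → (j : ℕ) < (f i : ℕ) →
      ¬ ((f i : ℕ) < (f j : ℕ))) ∧
    ∀ i : Fin (N + d), N ≤ (i : ℕ) → (f i : ℕ) < N

/-- An element `d ∈ Δ_{n+k}` (i.e. `0 ≤ d ≤ n+k` with `d ≡ n+k (mod 2)`) belongs to
`Δ_{n,k} = {d : n + d ≥ k}` if and only if there exists a monic `(n+k,d)`-diagram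
with no link joining two of the bottom `k` left (boundary) points, i.e. the points
with indices in `[n, n+k)`. -/
theorem mem_deltaSeam_iff_exists_diagram (n k d : ℕ) (hn : 1 ≤ n) (hk : 2 ≤ k)
    (hd : d ≤ n + k) (hpar : d % 2 = (n + k) % 2) :
    k ≤ n + d ↔
      ∃ f : Fin ((n + k) + d) → Fin ((n + k) + d),
        IsMonicDiagram (n + k) d f ∧
        ∀ i : Fin ((n + k) + d), n ≤ (i : ℕ) → (i : ℕ) < n + k →
          ¬ (n ≤ (f i : ℕ) ∧ (f i : ℕ) < n + k) := by
  constructor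
  · -- Construction
    intro h
    set N := n + k with hN
    have hmpar : (N - d) % 2 = 0 := by omega
    set m := N - d with hm
    have hmN : m ≤ N := by omega
    have hm2n : m ≤ 2 * n := by omega
    refine ⟨fun i => if _ : (i : ℕ) < m then ⟨m - 1 - (i : ℕ), by omega⟩
        else ⟨2 * N - 1 - (i : ℕ), by have := i.isLt; omega⟩, ?_, ?_⟩
    · set f : Fin (N + d) → Fin (N + d) := fun i =>
        if _ : (i : ℕ) < m then ⟨m - 1 - (i : ℕ), by omega⟩
        else ⟨2 * N - 1 - (i : ℕ), by have := i.isLt; omega⟩ with hf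
      have key : ∀ x : Fin (N + d),
          (f x : ℕ) = if (x : ℕ) < m then m - 1 - (x : ℕ) else 2 * N - 1 - (x : ℕ) := by
        intro x
        simp only [hf]
        split_ifs with h1 h2 <;> simp_all
      refine ⟨?_, ?_, ?_, ?_⟩
      · intro x
        apply Fin.ext
        rw [key, key]
        have hx := x.isLt
        split_ifs <;> omega
      · intro x hx
        have hx2 := x.isLt
        have := key x
        apply_fun (Fin.val) at hx
        rw [this] at hx
        split_ifs at hx <;> omega
      · intro i j hij hjfi hcon
        have hi := i.isLt
        have hj := j.isLt
        have k1 := key i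
        have k2 := key j
        rw [k1] at hjfi hcon
        rw [k2] at hcon
        split_ifs at hjfi hcon <;> omega
      · intro i hi
        have hi2 := i.isLt
        rw [key]
        split_ifs <;> omega
    · intro i hi1 hi2
      have hi3 := i.isLt
      dsimp only
      split_ifs with h1 <;> simp only [] <;> omega
  · -- Counting
    rintro ⟨f, ⟨finv, _, _, _⟩, hbd⟩
    have finj : Function.Injective f := finv.injective
    have hval : ∀ b : Fin k, n + (b : ℕ) < (n + k) + d := fun b => by have := b.isLt; omega
    have hout : ∀ b : Fin k, (f ⟨n + (b : ℕ), hval b⟩ : ℕ) < n ∨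
        n + k ≤ (f ⟨n + (b : ℕ), hval b⟩ : ℕ) := by
      intro b
      have hb := b.isLt
      have := hbd ⟨n + (b : ℕ), hval b⟩ (by simp only [Fin.val_mk]; omega)
        (by simp only [Fin.val_mk]; omega)
      omega
    have ginj : Function.Injective (fun b : Fin k =>
        if _ : (f ⟨n + (b : ℕ), hval b⟩ : ℕ) < n then
          (⟨(f ⟨n + (b : ℕ), hval b⟩ : ℕ), by omega⟩ : Fin (n + d))
        else ⟨(f ⟨n + (b : ℕ), hval b⟩ : ℕ) - (n + k) + n, by
          have h1 := hout b
          have h2 := (f ⟨n + (b : ℕ), hval b⟩).isLt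
          omega⟩) := by
      intro b1 b2 hb
      have h1 := hout b1
      have h2 := hout b2
      have e1 := (f ⟨n + (b1 : ℕ), hval b1⟩).isLt
      have e2 := (f ⟨n + (b2 : ℕ), hval b2⟩).isLt
      simp only [] at hb
      have hfeq : (f ⟨n + (b1 : ℕ), hval b1⟩ : ℕ) = (f ⟨n + (b2 : ℕ), hval b2⟩ : ℕ) := by
        split_ifs at hb with h3 h4 h4 <;>
          (rw [Fin.mk.injEq] at hb; omega)
      have : f ⟨n + (b1 : ℕ), hval b1⟩ = f ⟨n + (b2 : ℕ), hval b2⟩ := Fin.ext hfeq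
      have := finj this
      rw [Fin.mk.injEq] at this
      exact Fin.ext (by omega)
    have := Fintype.card_le_of_injective _ ginj
    simpa using this
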